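/- arXiv:1705.09048 — 2 statements merged into one kernel-verified Lean document; each statement's English description precedes it below -/
import Mathlib

section
/- Suppose U : ℝᵈ → ℝ is m-strongly convex and L-smooth with minimizer at 0 and U(0) = 0, let p* ∝ e^{-U}, and p₀ = N(0, (1/m)I). Then KL(p₀ ‖ p*) ≤ dL/m. -/
/-!
Restricting `U` to the segment from `0` to `x` and using the Hessian bounds twice gives
`m/2 ‖x‖² ≤ U x ≤ L/2 ‖x‖²`. Writing `p₀ = C e^{-m‖x‖²/2}` and `Z = ∫ e^{-U}`,
`KL(p₀ ‖ p*) = log (C Z) - (m/2) E‖x‖² + E U` with expectations under `p₀`. The lower bound on `U`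
gives `Z ≤ ∫ e^{-m‖x‖²/2} = C⁻¹`, the second moment is `E‖x‖² = d/m`, and the upper bound gives
`E U ≤ dL/(2m)`; hence `KL ≤ dL/(2m) - d/2 ≤ dL/m`.
-/

open MeasureTheory Real
open scoped RealInnerProductSpace

lemma add_deriv_mul_sub_le_of_deriv2_nonneg {ψ ψ' ψ'' : ℝ → ℝ}
    (hψ : ∀ t, HasDerivAt ψ (ψ' t) t) (hψ' : ∀ t, HasDerivAt ψ' (ψ'' t) t)
    (hψ'' : ∀ t, 0 ≤ ψ'' t) {a b : ℝ} (hab : a ≤ b) :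
    ψ a + ψ' a * (b - a) ≤ ψ b := by
  rcases hab.eq_or_lt with rfl | hab
  · simp
  obtain ⟨c, hc, hslope⟩ := exists_hasDerivAt_eq_slope ψ ψ' hab
    (continuous_iff_continuousAt.2 fun t => (hψ t).continuousAt).continuousOn fun t _ => hψ t
  have hmono : ψ' a ≤ ψ' c := monotone_of_hasDerivAt_nonneg hψ' hψ'' hc.1.le
  rw [eq_div_iff (sub_ne_zero.2 hab.ne')] at hslope
  nlinarith [sub_pos.2 hab]

section Taylor

variable {E : Type*} [NormedAddCommGroup E] [InnerProductSpace ℝ E]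
  {U : E → ℝ} {g : E → E} {H : E → E →L[ℝ] E}

lemma hasDerivAt_const_add_smul (y v : E) (t : ℝ) :
    HasDerivAt (fun s : ℝ => y + s • v) v t := by
  simpa using ((hasDerivAt_id t).smul_const v).const_add y

lemma hasDerivAt_apply_add_smul [CompleteSpace E] (hgrad : ∀ x, HasGradientAt U (g x) x)
    (y v : E) (t : ℝ) :
    HasDerivAt (fun s : ℝ => U (y + s • v)) ⟪g (y + t • v), v⟫ t := by
  simpa [Function.comp_def, InnerProductSpace.toDual_apply_apply] using
    (hgrad (y + t • v)).hasFDerivAt.comp_hasDerivAt t (hasDerivAt_const_add_smul y v t)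

lemma hasDerivAt_inner_apply_add_smul (hhess : ∀ x, HasFDerivAt g (H x) x) (y v : E) (t : ℝ) :
    HasDerivAt (fun s : ℝ => ⟪g (y + s • v), v⟫) ⟪H (y + t • v) v, v⟫ t := by
  simpa using ((hhess (y + t • v)).comp_hasDerivAt t
    (hasDerivAt_const_add_smul y v t)).inner ℝ (hasDerivAt_const t v)

lemma apply_add_le_of_inner_hessian_le [CompleteSpace E] {L : ℝ}
    (hgrad : ∀ x, HasGradientAt U (g x) x) (hhess : ∀ x, HasFDerivAt g (H x) x)
    (hH : ∀ x v, ⟪H x v, v⟫ ≤ L * ‖v‖ ^ 2) (y v : E) :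
    U (y + v) ≤ U y + ⟪g y, v⟫ + L / 2 * ‖v‖ ^ 2 := by
  have htangent := add_deriv_mul_sub_le_of_deriv2_nonneg
    (ψ := fun t => L / 2 * ‖v‖ ^ 2 * t ^ 2 - U (y + t • v))
    (ψ' := fun t => L * ‖v‖ ^ 2 * t - ⟪g (y + t • v), v⟫)
    (fun t => (((hasDerivAt_pow 2 t).const_mul _).sub
      (hasDerivAt_apply_add_smul hgrad y v t)).congr_deriv (by ring))
    (fun t => (((hasDerivAt_id t).const_mul _).sub
      (hasDerivAt_inner_apply_add_smul hhess y v t)).congr_deriv (by simp))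
    (fun t => sub_nonneg.2 (hH (y + t • v) v)) zero_le_one
  simp only [zero_smul, add_zero, one_smul] at htangent
  linarith

lemma le_apply_add_of_le_inner_hessian [CompleteSpace E] {m : ℝ}
    (hgrad : ∀ x, HasGradientAt U (g x) x) (hhess : ∀ x, HasFDerivAt g (H x) x)
    (hH : ∀ x v, m * ‖v‖ ^ 2 ≤ ⟪H x v, v⟫) (y v : E) :
    U y + ⟪g y, v⟫ + m / 2 * ‖v‖ ^ 2 ≤ U (y + v) := by
  have htangent := add_deriv_mul_sub_le_of_deriv2_nonneg
    (ψ := fun t => U (y + t • v) - m / 2 * ‖v‖ ^ 2 * t ^ 2)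
    (ψ' := fun t => ⟪g (y + t • v), v⟫ - m * ‖v‖ ^ 2 * t)
    (fun t => ((hasDerivAt_apply_add_smul hgrad y v t).sub
      ((hasDerivAt_pow 2 t).const_mul _)).congr_deriv (by ring))
    (fun t => ((hasDerivAt_inner_apply_add_smul hhess y v t).sub
      ((hasDerivAt_id t).const_mul _)).congr_deriv (by simp))
    (fun t => sub_nonneg.2 (hH (y + t • v) v)) zero_le_one
  simp only [zero_smul, add_zero, one_smul] at htangent
  linarith

end Taylor

section Gaussian

variable {ι : Type*} [Fintype ι] {b : ℝ}

lemma integrable_sq_mul_exp_neg_mul_sq (hb : 0 < b) :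
    Integrable fun t : ℝ => t ^ 2 * exp (-b * t ^ 2) := by
  simpa using integrable_rpow_mul_exp_neg_mul_sq hb (s := 2) (by norm_num)

-- Integrate `(t * exp (-b t²))' = exp (-b t²) - 2 b t² exp (-b t²)` over the line.
lemma integral_sq_mul_exp_neg_mul_sq (hb : 0 < b) :
    ∫ t : ℝ, t ^ 2 * exp (-b * t ^ 2) = (2 * b)⁻¹ * ∫ t : ℝ, exp (-b * t ^ 2) := by
  have hderiv : ∀ t : ℝ, HasDerivAt (fun t => t * exp (-b * t ^ 2))
      (exp (-b * t ^ 2) - 2 * b * (t ^ 2 * exp (-b * t ^ 2))) t := fun t => by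
    refine ((hasDerivAt_id' t).mul (((hasDerivAt_pow 2 t).const_mul (-b)).exp)).congr_deriv ?_
    push_cast
    ring
  have h := integral_eq_zero_of_hasDerivAt_of_integrable hderiv
    ((integrable_exp_neg_mul_sq hb).sub ((integrable_sq_mul_exp_neg_mul_sq hb).const_mul _))
    (integrable_mul_exp_neg_mul_sq hb)
  rw [integral_sub (integrable_exp_neg_mul_sq hb)
    ((integrable_sq_mul_exp_neg_mul_sq hb).const_mul _), integral_const_mul] at h
  rw [eq_inv_mul_iff_mul_eq₀ (by positivity)]
  linarith

lemma integrable_exp_neg_mul_sq_norm {V : Type*} [NormedAddCommGroup V] [InnerProductSpace ℝ V]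
    [FiniteDimensional ℝ V] [MeasurableSpace V] [BorelSpace V] (hb : 0 < b) :
    Integrable fun x : V => exp (-b * ‖x‖ ^ 2) := by
  refine Integrable.of_integral_ne_zero ?_
  rw [GaussianFourier.integral_rexp_neg_mul_sq_norm hb]
  positivity

lemma EuclideanSpace.sq_norm_toLp (y : ι → ℝ) : ‖WithLp.toLp 2 y‖ ^ 2 = ∑ i, y i ^ 2 := by
  simp [EuclideanSpace.norm_sq_eq]

lemma exp_neg_mul_sq_norm_toLp (y : ι → ℝ) :
    exp (-b * ‖WithLp.toLp 2 y‖ ^ 2) = ∏ j, exp (-b * y j ^ 2) := by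
  rw [EuclideanSpace.sq_norm_toLp, Finset.mul_sum, Real.exp_sum]

lemma sq_norm_toLp_mul_exp_neg_mul_sq_norm_toLp [DecidableEq ι] (y : ι → ℝ) :
    ‖WithLp.toLp 2 y‖ ^ 2 * exp (-b * ‖WithLp.toLp 2 y‖ ^ 2)
      = ∑ i, ∏ j, (if j = i then y j ^ 2 else 1) * exp (-b * y j ^ 2) := by
  rw [exp_neg_mul_sq_norm_toLp, EuclideanSpace.sq_norm_toLp, Finset.sum_mul]
  simp only [Finset.prod_mul_distrib, Finset.prod_ite_eq', Finset.mem_univ, if_true]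

lemma integrable_prod_ite_sq_mul_exp_neg_mul_sq [DecidableEq ι] (hb : 0 < b) (i : ι) :
    Integrable fun y : ι → ℝ => ∏ j, (if j = i then y j ^ 2 else 1) * exp (-b * y j ^ 2) := by
  refine Integrable.fintype_prod (f := fun j t => (if j = i then t ^ 2 else 1) * exp (-b * t ^ 2))
    fun j => ?_
  split_ifs
  · exact integrable_sq_mul_exp_neg_mul_sq hb
  · simpa using integrable_exp_neg_mul_sq hb

lemma integral_prod_ite_sq_mul_exp_neg_mul_sq [DecidableEq ι] (hb : 0 < b) (i : ι) :
    ∫ y : ι → ℝ, ∏ j, (if j = i then y j ^ 2 else 1) * exp (-b * y j ^ 2)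
      = (2 * b)⁻¹ * (∫ t : ℝ, exp (-b * t ^ 2)) ^ Fintype.card ι := by
  have hfactor : ∀ j, ∫ t : ℝ, (if j = i then t ^ 2 else 1) * exp (-b * t ^ 2)
      = (if j = i then (2 * b)⁻¹ else 1) * ∫ t : ℝ, exp (-b * t ^ 2) := fun j => by
    split_ifs
    · exact integral_sq_mul_exp_neg_mul_sq hb
    · simp
  rw [integral_fintype_prod_volume_eq_prod
    (f := fun j t => (if j = i then t ^ 2 else 1) * exp (-b * t ^ 2))]
  simp only [hfactor, Finset.prod_mul_distrib, Finset.prod_ite_eq', Finset.mem_univ, if_true,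
    Finset.prod_const, Finset.card_univ]

lemma integrable_sq_norm_mul_exp_neg_mul_sq_norm (hb : 0 < b) :
    Integrable fun x : EuclideanSpace ℝ ι => ‖x‖ ^ 2 * exp (-b * ‖x‖ ^ 2) := by
  classical
  rw [← (PiLp.volume_preserving_toLp ι).integrable_comp_emb
    (MeasurableEquiv.toLp 2 _).measurableEmbedding]
  simp only [Function.comp_def, sq_norm_toLp_mul_exp_neg_mul_sq_norm_toLp]
  exact integrable_finsetSum _ fun i _ => integrable_prod_ite_sq_mul_exp_neg_mul_sq hb i

lemma integral_sq_norm_mul_exp_neg_mul_sq_norm (hb : 0 < b) :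
    ∫ x : EuclideanSpace ℝ ι, ‖x‖ ^ 2 * exp (-b * ‖x‖ ^ 2)
      = Fintype.card ι / (2 * b) * ∫ x : EuclideanSpace ℝ ι, exp (-b * ‖x‖ ^ 2) := by
  classical
  simp only [← (PiLp.volume_preserving_toLp ι).integral_comp
    (MeasurableEquiv.toLp 2 _).measurableEmbedding]
  rw [integral_congr_ae (.of_forall sq_norm_toLp_mul_exp_neg_mul_sq_norm_toLp)]
  simp only [exp_neg_mul_sq_norm_toLp]
  rw [integral_finsetSum _ fun i _ => integrable_prod_ite_sq_mul_exp_neg_mul_sq hb i,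
    integral_fintype_prod_volume_eq_pow (fun t : ℝ => exp (-b * t ^ 2))]
  simp only [integral_prod_ite_sq_mul_exp_neg_mul_sq hb, Finset.sum_const, Finset.card_univ,
    nsmul_eq_mul]
  ring

end Gaussian

section IsotropicGaussian

variable {d : ℕ} {m : ℝ}

/-- The density of `N(0, m⁻¹ I)` on `ℝᵈ`. -/
noncomputable def isotropicGaussianPDF (m : ℝ) (x : EuclideanSpace ℝ (Fin d)) : ℝ :=
  (m / (2 * π)) ^ ((d : ℝ) / 2) * exp (-(m / 2) * ‖x‖ ^ 2)

lemma isotropicGaussianPDF_pos (hm : 0 < m) (x : EuclideanSpace ℝ (Fin d)) :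
    0 < isotropicGaussianPDF m x := by
  unfold isotropicGaussianPDF
  positivity

lemma log_isotropicGaussianPDF (hm : 0 < m) (x : EuclideanSpace ℝ (Fin d)) :
    log (isotropicGaussianPDF m x) = log ((m / (2 * π)) ^ ((d : ℝ) / 2)) - m / 2 * ‖x‖ ^ 2 := by
  rw [isotropicGaussianPDF, log_mul (by positivity) (exp_pos _).ne', log_exp]
  ring

lemma isotropicGaussianPDF_normalizer_mul_integral (hm : 0 < m) :
    (m / (2 * π)) ^ ((d : ℝ) / 2) * ∫ x : EuclideanSpace ℝ (Fin d), exp (-(m / 2) * ‖x‖ ^ 2)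
      = 1 := by
  rw [GaussianFourier.integral_rexp_neg_mul_sq_norm (by positivity), finrank_euclideanSpace_fin,
    ← mul_rpow (by positivity) (by positivity)]
  field_simp
  exact one_rpow _

lemma integrable_isotropicGaussianPDF (hm : 0 < m) :
    Integrable (isotropicGaussianPDF (d := d) m) :=
  (integrable_exp_neg_mul_sq_norm (by positivity)).const_mul _

lemma integral_isotropicGaussianPDF (hm : 0 < m) :
    ∫ x : EuclideanSpace ℝ (Fin d), isotropicGaussianPDF m x = 1 := by
  rw [← isotropicGaussianPDF_normalizer_mul_integral hm, ← integral_const_mul]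
  rfl

lemma integrable_sq_norm_mul_isotropicGaussianPDF (hm : 0 < m) :
    Integrable fun x : EuclideanSpace ℝ (Fin d) => ‖x‖ ^ 2 * isotropicGaussianPDF m x := by
  simpa only [isotropicGaussianPDF, mul_left_comm] using
    (integrable_sq_norm_mul_exp_neg_mul_sq_norm (ι := Fin d) (b := m / 2) (by positivity)).const_mul
      ((m / (2 * π)) ^ ((d : ℝ) / 2))

lemma integral_sq_norm_mul_isotropicGaussianPDF (hm : 0 < m) :
    ∫ x : EuclideanSpace ℝ (Fin d), ‖x‖ ^ 2 * isotropicGaussianPDF m x = d / m := by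
  simp only [isotropicGaussianPDF, mul_left_comm (‖_‖ ^ 2)]
  rw [integral_const_mul, integral_sq_norm_mul_exp_neg_mul_sq_norm (by positivity),
    mul_left_comm, isotropicGaussianPDF_normalizer_mul_integral hm, Fintype.card_fin]
  field_simp

end IsotropicGaussian

lemma integrable_exp_neg_of_mul_sq_norm_le {V : Type*} [NormedAddCommGroup V]
    [InnerProductSpace ℝ V] [FiniteDimensional ℝ V] [MeasurableSpace V] [BorelSpace V]
    {U : V → ℝ} {b : ℝ} (hb : 0 < b) (hU : Continuous U) (hlow : ∀ x, b * ‖x‖ ^ 2 ≤ U x) :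
    Integrable fun x => exp (-U x) :=
  (integrable_exp_neg_mul_sq_norm hb).mono' (hU.neg.rexp).aestronglyMeasurable
    (Filter.Eventually.of_forall fun x => by
      rw [norm_of_nonneg (exp_pos _).le]
      exact exp_le_exp.2 (by linarith [hlow x]))

section Gibbs

variable {d : ℕ} {m L : ℝ} {U : EuclideanSpace ℝ (Fin d) → ℝ}

lemma normalizer_mul_integral_exp_neg_le_one (hm : 0 < m) (hU : Continuous U)
    (hlow : ∀ x, m / 2 * ‖x‖ ^ 2 ≤ U x) :
    (m / (2 * π)) ^ ((d : ℝ) / 2) * ∫ x, exp (-U x) ≤ 1 := by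
  rw [← isotropicGaussianPDF_normalizer_mul_integral hm]
  gcongr
  · exact integrable_exp_neg_of_mul_sq_norm_le (half_pos hm) hU hlow
  · exact integrable_exp_neg_mul_sq_norm (half_pos hm)
  · exact fun x => exp_le_exp.2 (by linarith [hlow x])

lemma isotropicGaussianPDF_mul_le (hm : 0 < m) (hup : ∀ x, U x ≤ L / 2 * ‖x‖ ^ 2)
    (x : EuclideanSpace ℝ (Fin d)) :
    isotropicGaussianPDF m x * U x ≤ L / 2 * (‖x‖ ^ 2 * isotropicGaussianPDF m x) := by
  nlinarith [mul_le_mul_of_nonneg_left (hup x) (isotropicGaussianPDF_pos hm x).le]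

lemma integrable_isotropicGaussianPDF_mul (hm : 0 < m) (hU : Continuous U)
    (hlow : ∀ x, m / 2 * ‖x‖ ^ 2 ≤ U x) (hup : ∀ x, U x ≤ L / 2 * ‖x‖ ^ 2) :
    Integrable fun x => isotropicGaussianPDF m x * U x := by
  have hp : Continuous (isotropicGaussianPDF (d := d) m) := by
    unfold isotropicGaussianPDF; fun_prop
  refine ((integrable_sq_norm_mul_isotropicGaussianPDF hm).const_mul (L / 2)).mono'
    (hp.mul hU).aestronglyMeasurable (Filter.Eventually.of_forall fun x => ?_)
  rw [norm_of_nonneg (mul_nonneg (isotropicGaussianPDF_pos hm x).le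
    ((by positivity : 0 ≤ m / 2 * ‖x‖ ^ 2).trans (hlow x)))]
  exact isotropicGaussianPDF_mul_le hm hup x

lemma integral_isotropicGaussianPDF_mul_le (hm : 0 < m) (hU : Continuous U)
    (hlow : ∀ x, m / 2 * ‖x‖ ^ 2 ≤ U x) (hup : ∀ x, U x ≤ L / 2 * ‖x‖ ^ 2) :
    ∫ x, isotropicGaussianPDF m x * U x ≤ d * L / (2 * m) := by
  calc ∫ x, isotropicGaussianPDF m x * U x
      ≤ ∫ x, L / 2 * (‖x‖ ^ 2 * isotropicGaussianPDF m x) :=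
        integral_mono (integrable_isotropicGaussianPDF_mul hm hU hlow hup)
          ((integrable_sq_norm_mul_isotropicGaussianPDF hm).const_mul _)
          (isotropicGaussianPDF_mul_le hm hup)
    _ = d * L / (2 * m) := by
        rw [integral_const_mul, integral_sq_norm_mul_isotropicGaussianPDF hm]
        ring

theorem integral_isotropicGaussianPDF_mul_log_div_le (hm : 0 < m) (hU : Continuous U)
    (hlow : ∀ x, m / 2 * ‖x‖ ^ 2 ≤ U x) (hup : ∀ x, U x ≤ L / 2 * ‖x‖ ^ 2) :
    ∫ x, isotropicGaussianPDF m x *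
        log (isotropicGaussianPDF m x / (exp (-U x) / ∫ y, exp (-U y)))
      ≤ d * L / (2 * m) - d / 2 := by
  set p : EuclideanSpace ℝ (Fin d) → ℝ := isotropicGaussianPDF m
  set C : ℝ := (m / (2 * π)) ^ ((d : ℝ) / 2)
  set Z : ℝ := ∫ y, exp (-U y)
  have hZ : 0 < Z := integral_exp_pos (integrable_exp_neg_of_mul_sq_norm_le (half_pos hm) hU hlow)
  have hCZ : log C + log Z ≤ 0 := by
    rw [← log_mul (by positivity) hZ.ne']
    exact log_nonpos (by positivity) (normalizer_mul_integral_exp_neg_le_one hm hU hlow)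
  have hintegrand : ∀ x, p x * log (p x / (exp (-U x) / Z))
      = (log C + log Z) * p x - m / 2 * (‖x‖ ^ 2 * p x) + p x * U x := fun x => by
    rw [log_div (isotropicGaussianPDF_pos hm x).ne' (by positivity), log_div (exp_pos _).ne' hZ.ne',
      log_exp, log_isotropicGaussianPDF hm]
    ring
  have hgauss_part : Integrable fun x => (log C + log Z) * p x - m / 2 * (‖x‖ ^ 2 * p x) :=
    ((integrable_isotropicGaussianPDF hm).const_mul _).sub
      ((integrable_sq_norm_mul_isotropicGaussianPDF hm).const_mul _)
  simp only [hintegrand]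
  rw [integral_add hgauss_part (integrable_isotropicGaussianPDF_mul hm hU hlow hup),
    integral_sub ((integrable_isotropicGaussianPDF hm).const_mul _)
      ((integrable_sq_norm_mul_isotropicGaussianPDF hm).const_mul _),
    integral_const_mul, integral_const_mul, integral_isotropicGaussianPDF hm,
    integral_sq_norm_mul_isotropicGaussianPDF hm]
  have hm' : m / 2 * (d / m) = d / 2 := by field_simp
  linarith [integral_isotropicGaussianPDF_mul_le hm hU hlow hup]

end Gibbs

/-- For `U` m-strongly convex and L-smooth with minimizer 0 and `U(0)=0`,
`p* ∝ e^{-U}`, and `p₀ = N(0,(1/m)I)`, we have `KL(p₀‖p*) ≤ dL/m`. -/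
theorem stmt_4 {d : ℕ} (U : EuclideanSpace ℝ (Fin d) → ℝ)
    (g : EuclideanSpace ℝ (Fin d) → EuclideanSpace ℝ (Fin d))
    (H : EuclideanSpace ℝ (Fin d) → EuclideanSpace ℝ (Fin d) →L[ℝ] EuclideanSpace ℝ (Fin d))
    (m L : ℝ) (hm : 0 < m) (hmL : m ≤ L)
    (hgrad : ∀ x, HasGradientAt U (g x) x)
    (hhess : ∀ x, HasFDerivAt g (H x) x)
    (hlow : ∀ x v, m * ‖v‖ ^ 2 ≤ ⟪H x v, v⟫)
    (hup : ∀ x v, ⟪H x v, v⟫ ≤ L * ‖v‖ ^ 2)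
    (hU0 : U 0 = 0) (hg0 : g 0 = 0) :
    (∫ x : EuclideanSpace ℝ (Fin d),
        ((m / (2 * π)) ^ ((d : ℝ) / 2) * Real.exp (-(m / 2) * ‖x‖ ^ 2)) *
          Real.log (((m / (2 * π)) ^ ((d : ℝ) / 2) * Real.exp (-(m / 2) * ‖x‖ ^ 2)) /
            (Real.exp (-U x) / (∫ y : EuclideanSpace ℝ (Fin d), Real.exp (-U y)))))
      ≤ d * L / m := by
  have hquad : ∀ x, m / 2 * ‖x‖ ^ 2 ≤ U x ∧ U x ≤ L / 2 * ‖x‖ ^ 2 := fun x => by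
    have hle := le_apply_add_of_le_inner_hessian hgrad hhess hlow 0 x
    have hge := apply_add_le_of_inner_hessian_le hgrad hhess hup 0 x
    simp only [zero_add, hU0, hg0, inner_zero_left] at hle hge
    exact ⟨hle, hge⟩
  have hU : Continuous U := continuous_iff_continuousAt.2 fun x => (hgrad x).continuousAt
  have hdL : 0 ≤ d * L / m := by have := hm.le.trans hmL; positivity
  calc _ ≤ d * L / (2 * m) - d / 2 :=
        integral_isotropicGaussianPDF_mul_log_div_le hm hU (fun x => (hquad x).1)
          fun x => (hquad x).2
    _ ≤ d * L / m := by
        have : d * L / (2 * m) = d * L / m / 2 := by ring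
        linarith [(d.cast_nonneg : (0 : ℝ) ≤ d)]
end

section
/- Suppose U : ℝᵈ → ℝ satisfies ‖(x - t∇U(x))‖ ≤ (1 - mt)‖x‖ for all x and all 0 ≤ t ≤ 1/L (with 0 < m ≤ L). Let x' = x - t∇U(x) + √(2t)·ξ with ξ ∼ N(0, I_d) independent of x and 0 ≤ t ≤ 1/L. If E‖x‖² ≤ 4d/m, then E‖x'‖² ≤ 4d/m. -/
open MeasureTheory ProbabilityTheory

/-!
Write `x' = y + √(2t) ξ` with `y = x - t ∇U(x)`. Since `y` is a function of `x`, it is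
independent of the centred noise `ξ`, so the cross term vanishes and
`E‖x'‖² = E‖y‖² + 2t E‖ξ‖² = E‖y‖² + 2td`. The contraction gives
`‖y‖² ≤ (1 - mt)² ‖x‖² ≤ (1 - mt) ‖x‖²` because `0 ≤ mt ≤ Lt ≤ 1`. Hence
`E‖x'‖² ≤ (1 - mt) · 4d/m + 2td = 4d/m - 2td ≤ 4d/m`.
-/

section SecondMoment

variable {Ω E : Type*} [MeasurableSpace Ω] {μ : Measure Ω} [NormedAddCommGroup E]

theorem ProbabilityTheory.IndepFun.integral_norm_add_sq_of_integral_eq_zero [IsFiniteMeasure μ]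
    [InnerProductSpace ℝ E] [CompleteSpace E] [MeasurableSpace E] [BorelSpace E] {X Y : Ω → E}
    (hXY : IndepFun X Y μ) (hX : MemLp X 2 μ) (hY : MemLp Y 2 μ) (hY₀ : μ[Y] = 0) :
    ∫ ω, ‖X ω + Y ω‖ ^ 2 ∂μ = ∫ ω, ‖X ω‖ ^ 2 ∂μ + ∫ ω, ‖Y ω‖ ^ 2 ∂μ := by
  have hcross : ∫ ω, inner ℝ (X ω) (Y ω) ∂μ = 0 := by
    refine (hXY.integral_bilin (hX.integrable one_le_two) (hY.integrable one_le_two)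
      (innerSL ℝ)).trans ?_
    rw [hY₀, map_zero]
  have hX2 := hX.integrable_norm_pow two_ne_zero
  have hY2 := hY.integrable_norm_pow two_ne_zero
  have hXY2 : Integrable (fun ω ↦ 2 * inner ℝ (X ω) (Y ω)) μ :=
    (hXY.integrable_bilin (hX.integrable one_le_two) (hY.integrable one_le_two)
      (innerSL ℝ)).const_mul 2
  have hX2XY2 : Integrable (fun ω ↦ ‖X ω‖ ^ 2 + 2 * inner ℝ (X ω) (Y ω)) μ := hX2.add hXY2
  simp_rw [norm_add_sq_real]
  rw [integral_add hX2XY2 hY2, integral_add hX2 hXY2, integral_const_mul, hcross]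
  ring

theorem integral_norm_smul_sq [NormedSpace ℝ E] (c : ℝ) (X : Ω → E) :
    ∫ ω, ‖c • X ω‖ ^ 2 ∂μ = c ^ 2 * ∫ ω, ‖X ω‖ ^ 2 ∂μ := by
  simp_rw [norm_smul, mul_pow, Real.norm_eq_abs, sq_abs]
  exact integral_const_mul _ _

theorem integral_norm_sq_le_of_norm_le_mul {F : Type*} [NormedAddCommGroup F] {X : Ω → E}
    {Y : Ω → F} {k : ℝ} (hk₀ : 0 ≤ k) (hk₁ : k ≤ 1) (hX : MemLp X 2 μ)
    (hYX : ∀ ω, ‖Y ω‖ ≤ k * ‖X ω‖) :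
    ∫ ω, ‖Y ω‖ ^ 2 ∂μ ≤ k * ∫ ω, ‖X ω‖ ^ 2 ∂μ := by
  rw [← integral_const_mul]
  refine integral_mono_of_nonneg (.of_forall fun ω ↦ sq_nonneg _)
    ((hX.integrable_norm_pow two_ne_zero).const_mul k) (.of_forall fun ω ↦ ?_)
  calc ‖Y ω‖ ^ 2 ≤ (k * ‖X ω‖) ^ 2 := pow_le_pow_left₀ (norm_nonneg _) (hYX ω) 2
    _ = k * k * ‖X ω‖ ^ 2 := by ring
    _ ≤ 1 * k * ‖X ω‖ ^ 2 := by gcongr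
    _ = k * ‖X ω‖ ^ 2 := by rw [one_mul]

end SecondMoment

/-- If the drift step is contractive, `‖x - t∇U(x)‖ ≤ (1-mt)‖x‖`,
`0 ≤ t ≤ 1/L`, `0 < m ≤ L`, `ξ` standard Gaussian (mean zero, `E‖ξ‖² = d`)
independent of `x`, and `E‖x‖² ≤ 4d/m`, then
`x' = x - t∇U(x) + √(2t)ξ` also satisfies `E‖x'‖² ≤ 4d/m`. -/
theorem stmt_10 {d : ℕ} {Ω : Type*} [MeasurableSpace Ω] (μ : Measure Ω)
    [IsProbabilityMeasure μ]
    (x ξ : Ω → EuclideanSpace ℝ (Fin d))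
    (g : EuclideanSpace ℝ (Fin d) → EuclideanSpace ℝ (Fin d))
    (m L t : ℝ) (hm : 0 < m) (hmL : m ≤ L)
    (hcontr : ∀ (s : ℝ), 0 ≤ s → s ≤ 1 / L →
      ∀ a : EuclideanSpace ℝ (Fin d), ‖a - s • g a‖ ≤ (1 - m * s) * ‖a‖)
    (ht0 : 0 ≤ t) (ht1 : t ≤ 1 / L)
    (hx : MemLp x 2 μ) (hξ : MemLp ξ 2 μ)
    (hgmeas : Measurable g)
    (hindep : IndepFun x ξ μ)
    (hmean : (∫ ω, ξ ω ∂μ) = 0)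
    (hvar : (∫ ω, ‖ξ ω‖ ^ 2 ∂μ) = d)
    (hx2 : (∫ ω, ‖x ω‖ ^ 2 ∂μ) ≤ 4 * d / m) :
    (∫ ω, ‖x ω - t • g (x ω) + Real.sqrt (2 * t) • ξ ω‖ ^ 2 ∂μ) ≤ 4 * d / m := by
  have hmt : m * t ≤ 1 := calc
    m * t ≤ L * t := by gcongr
    _ ≤ L * (1 / L) := by gcongr; linarith
    _ = 1 := mul_one_div_cancel (hm.trans_le hmL).ne'
  have hdrift : Measurable fun a ↦ a - t • g a := measurable_id.sub (hgmeas.const_smul t)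
  have hy : MemLp (fun ω ↦ x ω - t • g (x ω)) 2 μ :=
    hx.of_le_mul
      (hdrift.comp_aemeasurable hx.aestronglyMeasurable.aemeasurable).aestronglyMeasurable
      (.of_forall fun ω ↦ by simpa using hcontr t ht0 ht1 (x ω))
  have hindep' :
      IndepFun (fun ω ↦ x ω - t • g (x ω)) (fun ω ↦ Real.sqrt (2 * t) • ξ ω) μ :=
    hindep.comp hdrift (measurable_const_smul _)
  have hsplit := hindep'.integral_norm_add_sq_of_integral_eq_zero hy
    (hξ.const_smul (Real.sqrt (2 * t))) (by rw [integral_smul, hmean, smul_zero])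
  rw [hsplit, integral_norm_smul_sq, hvar, Real.sq_sqrt (by positivity)]
  calc _ ≤ (1 - m * t) * ∫ ω, ‖x ω‖ ^ 2 ∂μ + 2 * t * d := by
        gcongr
        exact integral_norm_sq_le_of_norm_le_mul (by linarith) (by nlinarith) hx
          fun ω ↦ hcontr t ht0 ht1 (x ω)
    _ ≤ (1 - m * t) * (4 * d / m) + 2 * t * d := by gcongr
    _ = 4 * d / m - 2 * t * d := by field_simp; ring
    _ ≤ 4 * d / m := sub_le_self _ (mul_nonneg (by linarith) d.cast_nonneg)
end
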